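/- Finite length and rate for proximal gradient descent: let f : ℝⁿ → ℝ be differentiable with ∇f L_f-Lipschitz and bounded below, let φ : ℝⁿ → ℝ be M-weakly convex (M ∈ ℝ) and bounded below, let F = f + φ and F* a lower bound of F, and let 0 < τ < 2/(M + L_f). Let (x_k) be a sequence such that for each k, x_{k+1} minimizes u ↦ φ(u) + (1/(2τ))‖u − (x_k − τ·∇f(x_k))‖² over ℝⁿ. Then Σ_{k=0}^∞ ‖x_{k+1} − x_k‖² ≤ (F(x_0) − F*)/(1/τ − (M + L_f)/2) < ∞, and for every K ≥ 1, min_{0 ≤ k < K} ‖x_{k+1} − x_k‖² ≤ (1/K)·(F(x_0) − F*)/(1/τ − (M + L_f)/2). -/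

import Mathlib

/-!
The prox step makes `u ↦ φ u + ‖u - z‖² / (2τ)` a `(1/τ - M)`-strongly convex function minimized
at `x (k+1)`, so comparing with `u = x k` gains `(1/τ - M)/2 · ‖x (k+1) - x k‖²`, while the descent
lemma for `f` loses at most `L_f/2` times the same quantity; the gradient terms cancel. Hence `F`
drops by at least `(1/τ - (M + L_f)/2) · ‖x (k+1) - x k‖²` at every step. Telescoping against
`F ≥ F*` bounds all partial sums, which gives summability and the bound on the sum, and the
smallest of the first `K` terms is at most their average.
-/

open RealInnerProductSpace Set Filter Topology

section StrongConvexity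

variable {E : Type*} [NormedAddCommGroup E] [InnerProductSpace ℝ E]

theorem StrongConvexOn.add_le_of_isMinOn {s : Set E} {m : ℝ} {f : E → ℝ} {p u : E}
    (hf : StrongConvexOn s m f) (hp : IsMinOn f s p) (hps : p ∈ s) (hus : u ∈ s) :
    f p + m / 2 * ‖u - p‖ ^ 2 ≤ f u := by
  set c := m / 2 * ‖u - p‖ ^ 2 with hc
  have hsegment : ∀ t ∈ Ioc (0 : ℝ) 1, f p + (1 - t) * c ≤ f u := by
    rintro t ⟨ht0, ht1⟩
    have hmin : f p ≤ f (t • u + (1 - t) • p) :=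
      hp (hf.1 hus hps ht0.le (sub_nonneg.2 ht1) (add_sub_cancel t 1))
    have hconv := hf.2 hus hps ht0.le (sub_nonneg.2 ht1) (add_sub_cancel t 1)
    simp only [smul_eq_mul, ← hc] at hconv
    refine le_of_mul_le_mul_left ?_ ht0
    linear_combination hmin + hconv
  have hlim : Tendsto (fun t : ℝ => f p + (1 - t) * c) (𝓝[>] 0) (𝓝 (f p + c)) := by
    have hcont : Continuous (fun t : ℝ => f p + (1 - t) * c) := by fun_prop
    simpa using (hcont.tendsto 0).mono_left nhdsWithin_le_nhds
  exact le_of_tendsto hlim (eventually_of_mem (Ioc_mem_nhdsGT zero_lt_one) hsegment)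

theorem ConvexOn.strongConvexOn_add_sq_norm_sub {s : Set E} {φ : E → ℝ} {M : ℝ}
    (hφ : ConvexOn ℝ s (fun x => φ x + M / 2 * ‖x‖ ^ 2)) (τ : ℝ) (z : E) :
    StrongConvexOn s (1 / τ - M) (fun u => φ u + 1 / (2 * τ) * ‖u - z‖ ^ 2) := by
  rw [strongConvexOn_iff_convex]
  have haffine := ((-(1 / τ)) • innerₛₗ ℝ z).convexOn hφ.1 |>.add_const (1 / (2 * τ) * ‖z‖ ^ 2)
  refine (hφ.add haffine).congr fun u _ => ?_
  simp only [Pi.add_apply, LinearMap.smul_apply, innerₛₗ_apply_apply, smul_eq_mul,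
    norm_sub_sq_real, real_inner_comm z u]
  ring

end StrongConvexity

section ProximalGradient

variable {E : Type*} [NormedAddCommGroup E] [InnerProductSpace ℝ E] [CompleteSpace E]

theorem HasGradientAt.hasDerivAt_comp_add_smul {f : E → ℝ} {g : E} (u d : E) (t : ℝ)
    (hf : HasGradientAt f g (u + t • d)) :
    HasDerivAt (fun s : ℝ => f (u + s • d)) ⟪g, d⟫ t := by
  have hline : HasDerivAt (fun s : ℝ => u + s • d) d t := by
    simpa using ((hasDerivAt_id t).smul_const d).const_add u
  simpa [Function.comp_def] using hf.hasFDerivAt.comp_hasDerivAt t hline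

theorem le_add_inner_add_of_lipschitz_gradient {f : E → ℝ} {f' : E → E} {L : ℝ}
    (hf : ∀ x, HasGradientAt f (f' x) x) (hlip : ∀ u v, ‖f' u - f' v‖ ≤ L * ‖u - v‖)
    (u v : E) : f v ≤ f u + ⟪f' u, v - u⟫ + L / 2 * ‖v - u‖ ^ 2 := by
  set d := v - u with hd
  set h : ℝ → ℝ := fun t => f (u + t • d) - t * ⟪f' u, d⟫ - L / 2 * t ^ 2 * ‖d‖ ^ 2
  have hderiv (t : ℝ) :
      HasDerivAt h (⟪f' (u + t • d), d⟫ - ⟪f' u, d⟫ - L * t * ‖d‖ ^ 2) t := by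
    have := ((hf _).hasDerivAt_comp_add_smul u d t).sub (hasDerivAt_mul_const ⟪f' u, d⟫)
      |>.sub (((hasDerivAt_pow 2 t).const_mul (L / 2)).mul_const (‖d‖ ^ 2))
    exact this.congr_deriv (by ring)
  have hderiv_nonpos (t : ℝ) (ht : 0 < t) :
      ⟪f' (u + t • d), d⟫ - ⟪f' u, d⟫ - L * t * ‖d‖ ^ 2 ≤ 0 := by
    have hstep : ‖f' (u + t • d) - f' u‖ ≤ L * (t * ‖d‖) := by
      simpa [norm_smul, abs_of_pos ht] using hlip (u + t • d) u
    calc ⟪f' (u + t • d), d⟫ - ⟪f' u, d⟫ - L * t * ‖d‖ ^ 2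
        = ⟪f' (u + t • d) - f' u, d⟫ - L * t * ‖d‖ ^ 2 := by rw [inner_sub_left]
      _ ≤ ‖f' (u + t • d) - f' u‖ * ‖d‖ - L * t * ‖d‖ ^ 2 := by
          gcongr; exact real_inner_le_norm _ _
      _ ≤ L * (t * ‖d‖) * ‖d‖ - L * t * ‖d‖ ^ 2 := by gcongr
      _ = 0 := by ring
  have hanti : AntitoneOn h (Icc 0 1) := by
    refine antitoneOn_of_hasDerivWithinAt_nonpos (convex_Icc 0 1)
      (fun t _ => (hderiv t).continuousAt.continuousWithinAt)
      (fun t _ => (hderiv t).hasDerivWithinAt) fun t ht => ?_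
    rw [interior_Icc] at ht
    exact hderiv_nonpos t ht.1
  have h10 := hanti (left_mem_Icc.2 zero_le_one) (right_mem_Icc.2 zero_le_one) zero_le_one
  simp only [h, hd, one_smul, zero_smul, add_zero, add_sub_cancel, one_pow, zero_pow two_ne_zero,
    one_mul, zero_mul, mul_zero, sub_zero] at h10
  linarith

theorem pgd_sufficient_decrease {f φ : E → ℝ} {f' : E → E} {M L τ : ℝ}
    (hf : ∀ x, HasGradientAt f (f' x) x) (hlip : ∀ u v, ‖f' u - f' v‖ ≤ L * ‖u - v‖)
    (hφ : ConvexOn ℝ univ (fun x => φ x + M / 2 * ‖x‖ ^ 2)) (hτ : τ ≠ 0) {x y : E}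
    (hy : ∀ u, φ y + 1 / (2 * τ) * ‖y - (x - τ • f' x)‖ ^ 2 ≤
        φ u + 1 / (2 * τ) * ‖u - (x - τ • f' x)‖ ^ 2) :
    f y + φ y + (1 / τ - (M + L) / 2) * ‖y - x‖ ^ 2 ≤ f x + φ x := by
  have hprox := (hφ.strongConvexOn_add_sq_norm_sub τ (x - τ • f' x)).add_le_of_isMinOn
    (fun u _ => hy u) (mem_univ y) (mem_univ x)
  have hdesc := le_add_inner_add_of_lipschitz_gradient hf hlip x y
  have hy_sq : 1 / (2 * τ) * ‖y - (x - τ • f' x)‖ ^ 2 =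
      1 / (2 * τ) * ‖y - x‖ ^ 2 + ⟪f' x, y - x⟫ + τ / 2 * ‖f' x‖ ^ 2 := by
    rw [sub_sub_eq_add_sub, add_sub_right_comm, norm_add_sq_real, real_inner_smul_right,
      norm_smul, Real.norm_eq_abs, mul_pow, sq_abs, real_inner_comm]
    field_simp
  have hx_sq : 1 / (2 * τ) * ‖x - (x - τ • f' x)‖ ^ 2 = τ / 2 * ‖f' x‖ ^ 2 := by
    rw [sub_sub_cancel, norm_smul, Real.norm_eq_abs, mul_pow, sq_abs]
    field_simp
  rw [hy_sq, hx_sq, norm_sub_rev x y] at hprox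
  linear_combination hprox + hdesc

end ProximalGradient

theorem add_mul_sum_range_le_of_add_mul_le {V a : ℕ → ℝ} {D : ℝ}
    (hV : ∀ k, V (k + 1) + D * a k ≤ V k) (K : ℕ) :
    V K + D * ∑ k ∈ Finset.range K, a k ≤ V 0 := by
  induction K with
  | zero => simp
  | succ K ih =>
    rw [Finset.sum_range_succ, mul_add]
    linarith [hV K]

theorem Finset.exists_lt_le_mul_of_sum_range_le {a : ℕ → ℝ} {C : ℝ} {K : ℕ} (hK : 0 < K)
    (h : ∑ k ∈ Finset.range K, a k ≤ C) : ∃ k < K, a k ≤ 1 / (K : ℝ) * C := by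
  have hsum : ∑ k ∈ Finset.range K, a k ≤ ∑ _k ∈ Finset.range K, 1 / (K : ℝ) * C := by
    rw [Finset.sum_const, Finset.card_range, nsmul_eq_mul]
    field_simp
    exact h
  obtain ⟨k, hk, hle⟩ := Finset.exists_le_of_sum_le (Finset.nonempty_range_iff.2 hK.ne') hsum
  exact ⟨k, Finset.mem_range.1 hk, hle⟩

theorem pgd_finite_length_and_rate_general {n : ℕ}
    (f : EuclideanSpace ℝ (Fin n) → ℝ)
    (f' : EuclideanSpace ℝ (Fin n) → EuclideanSpace ℝ (Fin n))
    (φ : EuclideanSpace ℝ (Fin n) → ℝ) (M L_f τ Fstar : ℝ)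
    (hf : ∀ x, HasGradientAt f (f' x) x)
    (hlip : ∀ u v, ‖f' u - f' v‖ ≤ L_f * ‖u - v‖)
    (hφ : ConvexOn ℝ Set.univ (fun x => φ x + M / 2 * ‖x‖ ^ 2))
    (hτ : 0 < τ) (hτ2 : τ * (M + L_f) < 2)
    (F : EuclideanSpace ℝ (Fin n) → ℝ) (hF : ∀ x, F x = f x + φ x)
    (hFstar : ∀ x, Fstar ≤ F x)
    (x : ℕ → EuclideanSpace ℝ (Fin n))
    (hx : ∀ k, ∀ u,
      φ (x (k + 1)) + 1 / (2 * τ) * ‖x (k + 1) - (x k - τ • f' (x k))‖ ^ 2 ≤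
        φ u + 1 / (2 * τ) * ‖u - (x k - τ • f' (x k))‖ ^ 2) :
    Summable (fun k => ‖x (k + 1) - x k‖ ^ 2) ∧
    (∑' k : ℕ, ‖x (k + 1) - x k‖ ^ 2) ≤
      (F (x 0) - Fstar) / (1 / τ - (M + L_f) / 2) ∧
    (∀ K : ℕ, 1 ≤ K → ∃ k < K,
      ‖x (k + 1) - x k‖ ^ 2 ≤
        (1 / (K : ℝ)) * ((F (x 0) - Fstar) / (1 / τ - (M + L_f) / 2))) := by
  set D := 1 / τ - (M + L_f) / 2
  have hD : 0 < D := by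
    rw [sub_pos, div_lt_div_iff₀ two_pos hτ]
    linarith
  have hdecrease (k : ℕ) : F (x (k + 1)) + D * ‖x (k + 1) - x k‖ ^ 2 ≤ F (x k) := by
    rw [hF, hF]
    exact pgd_sufficient_decrease hf hlip hφ hτ.ne' (hx k)
  have hpartial (K : ℕ) :
      ∑ k ∈ Finset.range K, ‖x (k + 1) - x k‖ ^ 2 ≤ (F (x 0) - Fstar) / D := by
    rw [le_div_iff₀ hD]
    linarith [hFstar (x K), add_mul_sum_range_le_of_add_mul_le (V := fun k => F (x k))
      (a := fun k => ‖x (k + 1) - x k‖ ^ 2) hdecrease K]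
  exact ⟨summable_of_sum_range_le (fun _ => sq_nonneg _) hpartial,
    Real.tsum_le_of_sum_range_le (fun _ => sq_nonneg _) hpartial,
    fun K hK => Finset.exists_lt_le_mul_of_sum_range_le hK (hpartial K)⟩

/-- Finite length and rate for proximal gradient descent: with `f`
differentiable, `∇f` `L_f`-Lipschitz, `f` bounded below, `φ` `M`-weakly convex and bounded
below, `F = f + φ` with lower bound `F*`, `0 < τ` with `τ·(M + L_f) < 2` (i.e.
`τ < 2/(M+L_f)`), and `(x_k)` the PGD iterates, one has
`Σ_k ‖x_{k+1} − x_k‖² ≤ (F(x_0) − F*)/(1/τ − (M + L_f)/2) < ∞` and for every `K ≥ 1`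
there is `k < K` with `‖x_{k+1} − x_k‖² ≤ (1/K)·(F(x_0) − F*)/(1/τ − (M + L_f)/2)`. -/
theorem pgd_finite_length_and_rate {n : ℕ}
    (f : EuclideanSpace ℝ (Fin n) → ℝ)
    (f' : EuclideanSpace ℝ (Fin n) → EuclideanSpace ℝ (Fin n))
    (φ : EuclideanSpace ℝ (Fin n) → ℝ) (M L_f τ Fstar : ℝ)
    (hf : ∀ x, HasGradientAt f (f' x) x)
    (hlip : ∀ u v, ‖f' u - f' v‖ ≤ L_f * ‖u - v‖)
    (hfbd : ∃ c, ∀ x, c ≤ f x)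
    (hφ : ConvexOn ℝ Set.univ (fun x => φ x + M / 2 * ‖x‖ ^ 2))
    (hφbd : ∃ c, ∀ x, c ≤ φ x)
    (hτ : 0 < τ) (hτ2 : τ * (M + L_f) < 2)
    (F : EuclideanSpace ℝ (Fin n) → ℝ) (hF : ∀ x, F x = f x + φ x)
    (hFstar : ∀ x, Fstar ≤ F x)
    (x : ℕ → EuclideanSpace ℝ (Fin n))
    (hx : ∀ k, ∀ u,
      φ (x (k + 1)) + 1 / (2 * τ) * ‖x (k + 1) - (x k - τ • f' (x k))‖ ^ 2 ≤
        φ u + 1 / (2 * τ) * ‖u - (x k - τ • f' (x k))‖ ^ 2) :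
    Summable (fun k => ‖x (k + 1) - x k‖ ^ 2) ∧
    (∑' k : ℕ, ‖x (k + 1) - x k‖ ^ 2) ≤
      (F (x 0) - Fstar) / (1 / τ - (M + L_f) / 2) ∧
    (∀ K : ℕ, 1 ≤ K → ∃ k < K,
      ‖x (k + 1) - x k‖ ^ 2 ≤
        (1 / (K : ℝ)) * ((F (x 0) - Fstar) / (1 / τ - (M + L_f) / 2))) :=
  pgd_finite_length_and_rate_general f f' φ M L_f τ Fstar hf hlip hφ hτ hτ2 F hF hFstar x hx
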